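/- arXiv:2404.14683 — 2 statements merged into one kernel-verified Lean document; each statement's English description precedes it below -/
import Mathlib

section
/- Let (A,B) be controllable, 0 < t < T, and let ψ : ℝⁿ → ℝⁿ be such that ψ̂(x) := W(0,T)^{-1/2} e^{-AT} ψ(W(0,T)^{1/2} x) is monotone. Define K_t(x₀) = e^{At}( x₀ + W(0,t) W(0,T)^{-1} ( e^{-AT} ψ(x₀) - x₀ ) ). Then for all x₀ ≠ y₀, ⟨x₀ - y₀, W(0,t)^{-1} e^{-At}(K_t(x₀) - K_t(y₀))⟩ > 0; in particular K_t is injective. -/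
open Matrix NormedSpace
open scoped MatrixOrder

private theorem expCont {n : ℕ} (M : Matrix (Fin n) (Fin n) ℝ) :
    Continuous fun τ : ℝ => exp (τ • M) := by
  letI := Matrix.linftyOpNormedRing (n := Fin n) (α := ℝ)
  letI := Matrix.linftyOpNormedAlgebra (n := Fin n) (R := ℝ) (α := ℝ)
  exact continuous_iff_continuousAt.2 fun τ => (hasDerivAt_exp_smul_const M τ).continuousAt

private theorem expAdd {n : ℕ} (M : Matrix (Fin n) (Fin n) ℝ) (a b : ℝ) :
    exp (a • M) * exp (b • M) = exp ((a + b) • M) := by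
  rw [add_smul]
  exact (Matrix.exp_add_of_commute (a • M) (b • M)
    ((Commute.refl M).smul_left a |>.smul_right b)).symm

private theorem expMulComm {n : ℕ} (M : Matrix (Fin n) (Fin n) ℝ) (s : ℝ) :
    M * exp (s • M) = exp (s • M) * M := by
  letI := Matrix.linftyOpNormedRing (n := Fin n) (α := ℝ)
  letI := Matrix.linftyOpNormedAlgebra (n := Fin n) (R := ℝ) (α := ℝ)
  exact (hasDerivAt_exp_smul_const' M s).unique (hasDerivAt_exp_smul_const M s)

/-- The key controllability lemma: if `Bᵀ e^{-τAᵀ} v = 0` on an interval, then `v = 0`. -/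
private theorem vanish {n m : ℕ} (A : Matrix (Fin n) (Fin n) ℝ) (B : Matrix (Fin n) (Fin m) ℝ)
    (hctrb : Submodule.span ℝ
      {v : Fin n → ℝ | ∃ (k : Fin n) (j : Fin m), v = (A ^ (k : ℕ) * B)ᵀ j} = ⊤)
    (t T : ℝ) (htT : t < T) (v : Fin n → ℝ)
    (hu : ∀ τ ∈ Set.Ioo t T, Bᵀ *ᵥ (exp ((-τ) • Aᵀ) *ᵥ v) = 0) : v = 0 := by
  set τ₀ : ℝ := (t + T) / 2 with hτ₀
  set δ : ℝ := (T - t) / 2 with hδdef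
  have hδ : 0 < δ := by simp only [hδdef]; linarith
  set N : Matrix (Fin n) (Fin n) ℝ := -Aᵀ with hN
  obtain ⟨w, hwdef⟩ : ∃ w' : Fin n → ℝ, w' = exp ((-τ₀) • Aᵀ) *ᵥ v := ⟨_, rfl⟩
  have key : ∀ k : ℕ, ∀ s ∈ Set.Ioo (-δ) δ,
      (Bᵀ * N ^ k) *ᵥ (exp (s • N) *ᵥ w) = 0 := by
    intro k
    induction k with
    | zero =>
      intro s hs
      have h1 : exp (s • N) *ᵥ w = exp ((-(s + τ₀)) • Aᵀ) *ᵥ v := by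
        rw [hwdef, Matrix.mulVec_mulVec]
        have h2 : s • N = (-s) • Aᵀ := by simp [hN]
        rw [h2, expAdd, neg_add]
      rw [pow_zero, Matrix.mul_one, h1]
      refine hu (s + τ₀) ⟨?_, ?_⟩
      · have := hs.1; simp only [hτ₀, hδdef] at *; linarith
      · have := hs.2; simp only [hτ₀, hδdef] at *; linarith
    | succ k ih =>
      intro s hs
      funext j
      let L : Matrix (Fin n) (Fin n) ℝ →ₗ[ℝ] ℝ :=
        { toFun := fun X => ((Bᵀ * N ^ k) *ᵥ (X *ᵥ w)) j
          map_add' := fun X Y => by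
            simp [Matrix.add_mulVec, Matrix.mulVec_add]
          map_smul' := fun c X => by
            simp [Matrix.smul_mulVec, Matrix.mulVec_smul] }
      have hL0 : L (exp (s • N) * N) = 0 := by
        letI := Matrix.linftyOpNormedRing (n := Fin n) (α := ℝ)
        letI := Matrix.linftyOpNormedAlgebra (n := Fin n) (R := ℝ) (α := ℝ)
        have hD : HasDerivAt (fun s' : ℝ => L (exp (s' • N))) (L (exp (s • N) * N)) s :=
          (LinearMap.toContinuousLinearMap L).hasFDerivAt.comp_hasDerivAt s
            (hasDerivAt_exp_smul_const N s)
        have hEq : (fun s' : ℝ => L (exp (s' • N))) =ᶠ[nhds s] fun _ => (0 : ℝ) := by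
          filter_upwards [isOpen_Ioo.mem_nhds hs] with x hx
          exact congrFun (ih x hx) j
        have hD0 : HasDerivAt (fun s' : ℝ => L (exp (s' • N))) 0 s :=
          (hasDerivAt_const s (0 : ℝ)).congr_of_eventuallyEq hEq
        exact hD.unique hD0
      have h0 : ((Bᵀ * N ^ k) *ᵥ ((exp (s • N) * N) *ᵥ w)) j = 0 := hL0
      rw [← expMulComm] at h0
      have heq : (Bᵀ * N ^ (k + 1)) *ᵥ (exp (s • N) *ᵥ w) =
          (Bᵀ * N ^ k) *ᵥ ((N * exp (s • N)) *ᵥ w) := by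
        rw [Matrix.mulVec_mulVec, Matrix.mulVec_mulVec, pow_succ, ← Matrix.mul_assoc,
          Matrix.mul_assoc (Bᵀ * N ^ k)]
      rw [heq]
      exact h0
  have hk0 : ∀ k : ℕ, (Bᵀ * N ^ k) *ᵥ w = 0 := by
    intro k
    have := key k 0 ⟨by linarith, hδ⟩
    simpa [exp_zero] using this
  have hAk : ∀ k : ℕ, (Bᵀ * (Aᵀ) ^ k) *ᵥ w = 0 := by
    intro k
    have h1 : (Aᵀ : Matrix (Fin n) (Fin n) ℝ) = (-1 : ℝ) • N := by simp [hN]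
    rw [h1, smul_pow, Matrix.mul_smul, Matrix.smul_mulVec, hk0, smul_zero]
  have hw : w = 0 := by
    let φ : (Fin n → ℝ) →ₗ[ℝ] ℝ :=
      { toFun := fun u => u ⬝ᵥ w
        map_add' := fun a b => add_dotProduct a b w
        map_smul' := fun c a => smul_dotProduct c a w }
    have hsub : {v' : Fin n → ℝ | ∃ (k : Fin n) (j : Fin m), v' = (A ^ (k : ℕ) * B)ᵀ j} ⊆
        (LinearMap.ker φ : Set (Fin n → ℝ)) := by
      rintro _ ⟨k, j, rfl⟩
      have h2 : ((A ^ (k : ℕ) * B)ᵀ *ᵥ w) j = 0 := by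
        rw [Matrix.transpose_mul, Matrix.transpose_pow]
        exact congrFun (hAk k) j
      simp only [SetLike.mem_coe, LinearMap.mem_ker]
      exact h2
    have htop : (⊤ : Submodule ℝ (Fin n → ℝ)) ≤ LinearMap.ker φ := by
      rw [← hctrb]; exact Submodule.span_le.2 hsub
    have hww : w ⬝ᵥ w = 0 := htop (Submodule.mem_top (x := w))
    exact dotProduct_self_eq_zero.1 hww
  have hv : exp (τ₀ • Aᵀ) *ᵥ w = v := by
    rw [hwdef, Matrix.mulVec_mulVec, expAdd, add_neg_cancel, zero_smul, exp_zero,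
      Matrix.one_mulVec]
  rw [hw, Matrix.mulVec_zero] at hv
  exact hv.symm

/-- The Gramian increment `∫_t^T e^{-τA}BBᵀe^{-τAᵀ} dτ` is positive definite. -/
private theorem gram_posdef {n m : ℕ} (A : Matrix (Fin n) (Fin n) ℝ)
    (B : Matrix (Fin n) (Fin m) ℝ)
    (hctrb : Submodule.span ℝ
      {v : Fin n → ℝ | ∃ (k : Fin n) (j : Fin m), v = (A ^ (k : ℕ) * B)ᵀ j} = ⊤)
    (t T : ℝ) (htT : t < T) :
    Matrix.PosDef (Matrix.of fun i j : Fin n => ∫ τ in t..T,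
      (exp ((-τ) • A) * B * Bᵀ * exp ((-τ) • Aᵀ)) i j) := by
  have hE : Continuous fun τ : ℝ => exp ((-τ) • A) :=
    (expCont A).comp continuous_neg
  have hEt : Continuous fun τ : ℝ => exp ((-τ) • Aᵀ) :=
    (expCont Aᵀ).comp continuous_neg
  have hM : Continuous fun τ : ℝ =>
      exp ((-τ) • A) * B * Bᵀ * exp ((-τ) • Aᵀ) :=
    ((hE.matrix_mul continuous_const).matrix_mul continuous_const).matrix_mul hEt
  have hexpT : ∀ τ : ℝ, exp ((-τ) • Aᵀ) = (exp ((-τ) • A))ᵀ := by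
    intro τ
    rw [← Matrix.transpose_smul, Matrix.exp_transpose]
  have hCC : ∀ τ : ℝ, exp ((-τ) • A) * B * Bᵀ * exp ((-τ) • Aᵀ) =
      (exp ((-τ) • A) * B) * (exp ((-τ) • A) * B)ᵀ := by
    intro τ
    rw [Matrix.transpose_mul, hexpT, Matrix.mul_assoc (exp ((-τ) • A) * B)]
  have quad2 : ∀ (C : Matrix (Fin n) (Fin m) ℝ) (v : Fin n → ℝ),
      v ⬝ᵥ ((C * Cᵀ) *ᵥ v) = (Cᵀ *ᵥ v) ⬝ᵥ (Cᵀ *ᵥ v) := by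
    intro C v
    rw [← Matrix.mulVec_mulVec, Matrix.dotProduct_mulVec, ← Matrix.mulVec_transpose]
  have quad : ∀ v : Fin n → ℝ,
      v ⬝ᵥ ((Matrix.of fun i j : Fin n => ∫ τ in t..T,
        (exp ((-τ) • A) * B * Bᵀ * exp ((-τ) • Aᵀ)) i j) *ᵥ v) =
      ∫ τ in t..T, ((exp ((-τ) • A) * B)ᵀ *ᵥ v) ⬝ᵥ ((exp ((-τ) • A) * B)ᵀ *ᵥ v) := by
    intro v
    have h1 : ∀ i j : Fin n, v i * ((∫ τ in t..T,
        (exp ((-τ) • A) * B * Bᵀ * exp ((-τ) • Aᵀ)) i j) * v j) =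
        ∫ τ in t..T, v i * ((exp ((-τ) • A) * B * Bᵀ * exp ((-τ) • Aᵀ)) i j * v j) := by
      intro i j
      rw [← intervalIntegral.integral_mul_const, ← intervalIntegral.integral_const_mul]
    calc v ⬝ᵥ ((Matrix.of fun i j : Fin n => ∫ τ in t..T,
          (exp ((-τ) • A) * B * Bᵀ * exp ((-τ) • Aᵀ)) i j) *ᵥ v)
        = ∑ i, ∑ j, v i * ((∫ τ in t..T,
            (exp ((-τ) • A) * B * Bᵀ * exp ((-τ) • Aᵀ)) i j) * v j) := by
          simp [dotProduct, Matrix.mulVec, Finset.mul_sum]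
      _ = ∑ i, ∑ j, ∫ τ in t..T,
            v i * ((exp ((-τ) • A) * B * Bᵀ * exp ((-τ) • Aᵀ)) i j * v j) := by
          simp_rw [h1]
      _ = ∫ τ in t..T, ∑ i, ∑ j,
            v i * ((exp ((-τ) • A) * B * Bᵀ * exp ((-τ) • Aᵀ)) i j * v j) := by
          have hcont : ∀ i j : Fin n, Continuous fun τ : ℝ =>
              v i * ((exp ((-τ) • A) * B * Bᵀ * exp ((-τ) • Aᵀ)) i j * v j) := fun i j =>
            continuous_const.mul ((hM.matrix_elem i j).mul continuous_const)
          have step1 : ∀ i : Fin n, (∑ j, ∫ τ in t..T,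
              v i * ((exp ((-τ) • A) * B * Bᵀ * exp ((-τ) • Aᵀ)) i j * v j)) =
              ∫ τ in t..T, ∑ j, v i * ((exp ((-τ) • A) * B * Bᵀ * exp ((-τ) • Aᵀ)) i j * v j) :=
            fun i => (intervalIntegral.integral_finset_sum
              (fun j _ => (hcont i j).intervalIntegrable t T)).symm
          rw [Finset.sum_congr rfl fun i _ => step1 i]
          exact (intervalIntegral.integral_finset_sum (fun i _ =>
            (continuous_finset_sum _ fun j _ => hcont i j).intervalIntegrable t T)).symm
      _ = ∫ τ in t..T, ((exp ((-τ) • A) * B)ᵀ *ᵥ v) ⬝ᵥ ((exp ((-τ) • A) * B)ᵀ *ᵥ v) := by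
          congr 1
          funext τ
          rw [← quad2, ← hCC]
          simp [dotProduct, Matrix.mulVec, Finset.mul_sum]
  refine Matrix.PosDef.of_dotProduct_mulVec_pos ?_ ?_
  · -- Hermitian
    ext i j
    simp only [Matrix.conjTranspose_apply, Matrix.of_apply, star_trivial]
    congr 1
    funext τ
    have := hCC τ
    have hsymm : (exp ((-τ) • A) * B * Bᵀ * exp ((-τ) • Aᵀ))ᵀ =
        exp ((-τ) • A) * B * Bᵀ * exp ((-τ) • Aᵀ) := by
      rw [hCC τ, Matrix.transpose_mul, Matrix.transpose_transpose]
    exact congrFun (congrFun (congrArg Matrix.of hsymm) i) j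
  · -- positivity
    intro v hv
    simp only [star_trivial]
    rw [quad v]
    set f : ℝ → ℝ := fun τ =>
      ((exp ((-τ) • A) * B)ᵀ *ᵥ v) ⬝ᵥ ((exp ((-τ) • A) * B)ᵀ *ᵥ v) with hfdef
    have hfc : Continuous f := by
      apply Continuous.dotProduct <;>
        exact ((hE.matrix_mul continuous_const).matrix_transpose).matrix_mulVec continuous_const
    have hfnn : ∀ τ, 0 ≤ f τ := fun τ => Finset.sum_nonneg fun j _ => mul_self_nonneg _
    have hrel : ∀ τ : ℝ, (exp ((-τ) • A) * B)ᵀ *ᵥ v = Bᵀ *ᵥ (exp ((-τ) • Aᵀ) *ᵥ v) := by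
      intro τ
      rw [Matrix.transpose_mul, hexpT, Matrix.mulVec_mulVec]
    have hex : ∃ τ₀ ∈ Set.Ioo t T, f τ₀ ≠ 0 := by
      by_contra h
      push_neg at h
      refine hv (vanish A B hctrb t T htT v fun τ hτ => ?_)
      rw [← hrel]
      exact dotProduct_self_eq_zero.1 (h τ hτ)
    obtain ⟨τ₀, hτ₀, hfτ₀⟩ := hex
    have hint : IntervalIntegrable f MeasureTheory.volume t T := hfc.intervalIntegrable t T
    rw [intervalIntegral.integral_pos_iff_support_of_nonneg_ae
      (Filter.Eventually.of_forall hfnn) hint]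
    refine ⟨htT, ?_⟩
    have hUopen : IsOpen (f ⁻¹' Set.Ioi 0 ∩ Set.Ioo t T) :=
      (isOpen_Ioi.preimage hfc).inter isOpen_Ioo
    have hmem : τ₀ ∈ f ⁻¹' Set.Ioi 0 ∩ Set.Ioo t T :=
      ⟨lt_of_le_of_ne (hfnn τ₀) (Ne.symm hfτ₀), hτ₀⟩
    have hsub : f ⁻¹' Set.Ioi 0 ∩ Set.Ioo t T ⊆ Function.support f ∩ Set.Ioc t T :=
      fun x hx => ⟨ne_of_gt hx.1, Set.Ioo_subset_Ioc_self hx.2⟩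
    exact lt_of_lt_of_le (hUopen.measure_pos MeasureTheory.volume ⟨τ₀, hmem⟩)
      (MeasureTheory.measure_mono hsub)


private theorem mulVec_dot {k l : Type*} [Fintype k] [Fintype l] (M : Matrix k l ℝ)
    (a : l → ℝ) (b : k → ℝ) : (M *ᵥ a) ⬝ᵥ b = a ⬝ᵥ (Mᵀ *ᵥ b) := by
  rw [dotProduct_comm, Matrix.dotProduct_mulVec, dotProduct_comm, ← Matrix.mulVec_transpose]

private theorem inv_quad_lt {n : ℕ} {P Q : Matrix (Fin n) (Fin n) ℝ}
    (hP : P.PosDef) (hQ : Q.PosDef) (hD : (P - Q).PosDef) (d : Fin n → ℝ) (hd : d ≠ 0) :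
    d ⬝ᵥ (P⁻¹ *ᵥ d) < d ⬝ᵥ (Q⁻¹ *ᵥ d) := by
  have hPdet : IsUnit P.det := hP.det_pos.ne'.isUnit
  have hQdet : IsUnit Q.det := hQ.det_pos.ne'.isUnit
  have hPP : P * P⁻¹ = 1 := Matrix.mul_nonsing_inv P hPdet
  obtain ⟨E, hEdef⟩ : ∃ E : Matrix (Fin n) (Fin n) ℝ, E = P - Q := ⟨_, rfl⟩
  have hDE : E.PosDef := hEdef ▸ hD
  have hPQ : P = Q + E := by rw [hEdef]; abel
  obtain ⟨v, hv⟩ : ∃ v : Fin n → ℝ, v = P⁻¹ *ᵥ d := ⟨_, rfl⟩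
  have hdv : d = P *ᵥ v := by
    rw [hv, Matrix.mulVec_mulVec, hPP, Matrix.one_mulVec]
  have hvne : v ≠ 0 := by
    intro h0
    exact hd (by rw [hdv, h0, Matrix.mulVec_zero])
  have hQQ : ∀ x : Fin n → ℝ, Q⁻¹ *ᵥ (Q *ᵥ x) = x := fun x => by
    rw [Matrix.mulVec_mulVec, Matrix.nonsing_inv_mul Q hQdet, Matrix.one_mulVec]
  have hQQ' : ∀ x : Fin n → ℝ, Q *ᵥ (Q⁻¹ *ᵥ x) = x := fun x => by
    rw [Matrix.mulVec_mulVec, Matrix.mul_nonsing_inv Q hQdet, Matrix.one_mulVec]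
  have hQt : Qᵀ = Q := by
    have h := hQ.isHermitian
    rwa [Matrix.IsHermitian, Matrix.conjTranspose_eq_transpose_of_trivial] at h
  have h1 : d ⬝ᵥ (P⁻¹ *ᵥ d) = (Q *ᵥ v) ⬝ᵥ v + (E *ᵥ v) ⬝ᵥ v := by
    rw [← hv]
    nth_rewrite 1 [hdv]
    rw [hPQ, Matrix.add_mulVec, add_dotProduct]
  have h2 : d ⬝ᵥ (Q⁻¹ *ᵥ d) = (Q *ᵥ v) ⬝ᵥ v + v ⬝ᵥ (E *ᵥ v) + ((E *ᵥ v) ⬝ᵥ v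
      + (E *ᵥ v) ⬝ᵥ (Q⁻¹ *ᵥ (E *ᵥ v))) := by
    rw [hdv, hPQ, Matrix.add_mulVec, Matrix.mulVec_add, hQQ, add_dotProduct, dotProduct_add,
      dotProduct_add, mulVec_dot Q v (Q⁻¹ *ᵥ (E *ᵥ v)), hQt, hQQ']
  have hpos1 : 0 < v ⬝ᵥ (E *ᵥ v) := by
    have := hDE.dotProduct_mulVec_pos hvne
    simpa using this
  have hpos2 : 0 ≤ (E *ᵥ v) ⬝ᵥ (Q⁻¹ *ᵥ (E *ᵥ v)) := by
    have := hQ.inv.posSemidef.dotProduct_mulVec_nonneg (E *ᵥ v)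
    simpa using this
  linarith

/-- Let `(A,B)` be controllable, `0 < t < T`, with Gramians `W(0,t)`, `W(0,T)` positive
definite, and let `ψ : ℝⁿ → ℝⁿ` be such that
`ψ̂(x) := W(0,T)^{-1/2} e^{-AT} ψ(W(0,T)^{1/2} x)` is monotone. Define
`K_t(x₀) = e^{At}(x₀ + W(0,t) W(0,T)⁻¹ (e^{-AT} ψ(x₀) - x₀))`. Then for all `x₀ ≠ y₀`,
`⟨x₀ - y₀, W(0,t)⁻¹ e^{-At}(K_t(x₀) - K_t(y₀))⟩ > 0`; in particular `K_t` is injective. -/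
theorem stmt_9 {n m : ℕ} (A : Matrix (Fin n) (Fin n) ℝ) (B : Matrix (Fin n) (Fin m) ℝ)
    (hctrb : Submodule.span ℝ
      {v : Fin n → ℝ | ∃ (k : Fin n) (j : Fin m), v = (A ^ (k : ℕ) * B)ᵀ j} = ⊤)
    (t T : ℝ) (ht : 0 < t) (htT : t < T)
    (W : ℝ → Matrix (Fin n) (Fin n) ℝ)
    (hW : ∀ s : ℝ, W s = Matrix.of fun i j => ∫ τ in (0:ℝ)..s,
      (NormedSpace.exp ((-τ) • A) * B * Bᵀ * NormedSpace.exp ((-τ) • Aᵀ)) i j)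
    (hWt : (W t).PosDef) (hWT : (W T).PosDef)
    (ψ : (Fin n → ℝ) → (Fin n → ℝ))
    (hmono : ∀ x y : Fin n → ℝ,
      0 ≤ (x - y) ⬝ᵥ
        ((CFC.sqrt (W T))⁻¹ *ᵥ (NormedSpace.exp ((-T) • A) *ᵥ ψ (CFC.sqrt (W T) *ᵥ x)) -
         (CFC.sqrt (W T))⁻¹ *ᵥ (NormedSpace.exp ((-T) • A) *ᵥ ψ (CFC.sqrt (W T) *ᵥ y)))) :
    let K : (Fin n → ℝ) → (Fin n → ℝ) := fun x₀ =>
      NormedSpace.exp (t • A) *ᵥ (x₀ + (W t * (W T)⁻¹) *ᵥ (NormedSpace.exp ((-T) • A) *ᵥ ψ x₀ - x₀))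
    (∀ x₀ y₀ : Fin n → ℝ, x₀ ≠ y₀ →
        0 < (x₀ - y₀) ⬝ᵥ ((W t)⁻¹ *ᵥ (NormedSpace.exp ((-t) • A) *ᵥ (K x₀ - K y₀)))) ∧
      Function.Injective K := by
  intro K
  have hE : Continuous fun τ : ℝ => exp ((-τ) • A) := (expCont A).comp continuous_neg
  have hEt : Continuous fun τ : ℝ => exp ((-τ) • Aᵀ) := (expCont Aᵀ).comp continuous_neg
  have hMc : Continuous fun τ : ℝ => exp ((-τ) • A) * B * Bᵀ * exp ((-τ) • Aᵀ) :=
    ((hE.matrix_mul continuous_const).matrix_mul continuous_const).matrix_mul hEt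
  have hDmat : W T - W t = Matrix.of fun i j : Fin n => ∫ τ in t..T,
      (exp ((-τ) • A) * B * Bᵀ * exp ((-τ) • Aᵀ)) i j := by
    ext i j
    rw [hW, hW]
    simp only [Matrix.sub_apply, Matrix.of_apply]
    exact intervalIntegral.integral_interval_sub_left
      ((hMc.matrix_elem i j).intervalIntegrable 0 T) ((hMc.matrix_elem i j).intervalIntegrable 0 t)
  have hD : (W T - W t).PosDef := by
    rw [hDmat]; exact gram_posdef A B hctrb t T htT
  have hdetT : IsUnit (W T).det := hWT.det_pos.ne'.isUnit
  have hdett : IsUnit (W t).det := hWt.det_pos.ne'.isUnit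
  set S := CFC.sqrt (W T) with hS
  have hS2 : S * S = W T := CFC.sqrt_mul_sqrt_self (W T) hWT.posSemidef.nonneg
  have hSdet : IsUnit S.det := by
    have h : IsUnit (S.det * S.det) := by rw [← Matrix.det_mul, hS2]; exact hdetT
    exact isUnit_of_mul_isUnit_left h
  have hSt : Sᵀ = S := by
    have h := (CFC.sqrt_nonneg (W T)).isSelfAdjoint
    rwa [IsSelfAdjoint, Matrix.star_eq_conjTranspose, Matrix.conjTranspose_eq_transpose_of_trivial] at h
  have hSinv : S * S⁻¹ = 1 := Matrix.mul_nonsing_inv S hSdet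
  have hSinvmul : S⁻¹ * S⁻¹ = (W T)⁻¹ := by rw [← Matrix.mul_inv_rev, hS2]
  have hterm3 : ∀ x₀ y₀ : Fin n → ℝ,
      0 ≤ (x₀ - y₀) ⬝ᵥ ((W T)⁻¹ *ᵥ
        (exp ((-T) • A) *ᵥ ψ x₀ - exp ((-T) • A) *ᵥ ψ y₀)) := by
    intro x₀ y₀
    have h := hmono (S⁻¹ *ᵥ x₀) (S⁻¹ *ᵥ y₀)
    have hSx : S *ᵥ (S⁻¹ *ᵥ x₀) = x₀ := by
      rw [Matrix.mulVec_mulVec, hSinv, Matrix.one_mulVec]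
    have hSy : S *ᵥ (S⁻¹ *ᵥ y₀) = y₀ := by
      rw [Matrix.mulVec_mulVec, hSinv, Matrix.one_mulVec]
    rw [hSx, hSy, ← Matrix.mulVec_sub, ← Matrix.mulVec_sub, mulVec_dot,
      Matrix.transpose_nonsing_inv, hSt, Matrix.mulVec_mulVec, hSinvmul] at h
    exact h
  have hexp1 : exp ((-t) • A) * exp (t • A) = 1 := by
    rw [expAdd, neg_add_cancel, zero_smul, exp_zero]
  have hWtG : (W t)⁻¹ * (W t * (W T)⁻¹) = (W T)⁻¹ := by
    rw [← Matrix.mul_assoc, Matrix.nonsing_inv_mul _ hdett, Matrix.one_mul]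
  have hKey : ∀ x₀ y₀ : Fin n → ℝ,
      (W t)⁻¹ *ᵥ (exp ((-t) • A) *ᵥ (K x₀ - K y₀)) =
      (W t)⁻¹ *ᵥ (x₀ - y₀) + (W T)⁻¹ *ᵥ
        ((exp ((-T) • A) *ᵥ ψ x₀ - exp ((-T) • A) *ᵥ ψ y₀) - (x₀ - y₀)) := by
    intro x₀ y₀
    have hKdiff : K x₀ - K y₀ = exp (t • A) *ᵥ
        ((x₀ - y₀) + (W t * (W T)⁻¹) *ᵥ
          ((exp ((-T) • A) *ᵥ ψ x₀ - exp ((-T) • A) *ᵥ ψ y₀) - (x₀ - y₀))) := by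
      show exp (t • A) *ᵥ _ - exp (t • A) *ᵥ _ = _
      simp only [Matrix.mulVec_add, Matrix.mulVec_sub]
      abel
    rw [hKdiff, Matrix.mulVec_mulVec _ (exp ((-t) • A)) (exp (t • A)), hexp1,
      Matrix.one_mulVec, Matrix.mulVec_add, Matrix.mulVec_mulVec, hWtG]
  have hmain : ∀ x₀ y₀ : Fin n → ℝ, x₀ ≠ y₀ →
      0 < (x₀ - y₀) ⬝ᵥ ((W t)⁻¹ *ᵥ (exp ((-t) • A) *ᵥ (K x₀ - K y₀))) := by
    intro x₀ y₀ hxy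
    rw [hKey x₀ y₀, dotProduct_add,
      Matrix.mulVec_sub ((W T)⁻¹) _ (x₀ - y₀), dotProduct_sub]
    have hd : x₀ - y₀ ≠ 0 := sub_ne_zero.2 hxy
    have hlt := inv_quad_lt hWT hWt hD (x₀ - y₀) hd
    have h3 := hterm3 x₀ y₀
    linarith
  refine ⟨hmain, fun a b hab => ?_⟩
  by_contra hne
  have h := hmain a b hne
  rw [hab, sub_self, Matrix.mulVec_zero, Matrix.mulVec_zero, dotProduct_zero] at h
  exact lt_irrefl 0 h
end

section
/- Let G : ℝⁿ × ℝⁿ → ℝⁿ be C¹, let c > 0, ε₀ > 0, x ∈ ℝⁿ, and suppose that for all y in the closed ball B(0, ε₀) the smallest singular value of the partial derivative D₂G(x,y) is at least c/4, and G(x,0) = x. Then for every 0 < ε ≤ ε₀, the image of B(0,ε) under y ↦ G(x,y) contains the ball B(x, cε/4). -/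
set_option maxHeartbeats 1000000

open Metric Asymptotics Filter Set

/-- Let `G : ℝⁿ × ℝⁿ → ℝⁿ` be `C¹`, `c > 0`, `ε₀ > 0`, `x ∈ ℝⁿ`, and suppose that for all
`y` in the closed ball `B(0, ε₀)` the smallest singular value of `D₂G(x,y)` is at least
`c/4` (i.e. `|D₂G(x,y) v| ≥ (c/4)|v|` for all `v`), and `G(x,0) = x`. Then for every
`0 < ε ≤ ε₀`, the image of `B(0,ε)` under `y ↦ G(x,y)` contains the ball `B(x, cε/4)`. -/
theorem stmt_11 {n : ℕ}
    (G : EuclideanSpace ℝ (Fin n) × EuclideanSpace ℝ (Fin n) → EuclideanSpace ℝ (Fin n))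
    (hG : ContDiff ℝ 1 G) (c : ℝ) (hc : 0 < c) (ε₀ : ℝ) (hε₀ : 0 < ε₀)
    (x : EuclideanSpace ℝ (Fin n))
    (hsv : ∀ y ∈ Metric.closedBall (0 : EuclideanSpace ℝ (Fin n)) ε₀,
      ∀ v : EuclideanSpace ℝ (Fin n),
        (c / 4) * ‖v‖ ≤ ‖fderiv ℝ (fun z => G (x, z)) y v‖)
    (hx : G (x, 0) = x) :
    ∀ ε : ℝ, 0 < ε → ε ≤ ε₀ →
      Metric.closedBall x (c * ε / 4) ⊆
        (fun y => G (x, y)) '' Metric.closedBall (0 : EuclideanSpace ℝ (Fin n)) ε := by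
  intro ε hε hεε₀
  set f : EuclideanSpace ℝ (Fin n) → EuclideanSpace ℝ (Fin n) := fun y => G (x, y) with hfdef
  have hf : ContDiff ℝ 1 f := hG.comp (contDiff_const.prodMk contDiff_id)
  have hK : IsCompact (closedBall (0:EuclideanSpace ℝ (Fin n)) ε) := isCompact_closedBall _ _
  have himc : IsCompact (f '' closedBall (0:EuclideanSpace ℝ (Fin n)) ε) := hK.image hf.continuous
  -- main claim: the open ball is contained in the image
  have main : ∀ z : EuclideanSpace ℝ (Fin n), dist z x < c * ε / 4 → z ∈ f '' closedBall (0:EuclideanSpace ℝ (Fin n)) ε := by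
    intro z hz
    set r := dist z x with hrdef
    have hr0 : 0 ≤ r := dist_nonneg
    set α := (r/ε + c/4)/2 with hαdef
    have hβ : r/ε < c/4 := by
      rw [div_lt_iff₀ hε]; nlinarith
    have hα1 : r/ε < α := by simp only [hαdef]; linarith
    have hα2 : α < c/4 := by simp only [hαdef]; linarith
    have hα0 : 0 < α := by
      have : (0:ℝ) ≤ r/ε := div_nonneg hr0 hε.le
      simp only [hαdef]; linarith
    set g : EuclideanSpace ℝ (Fin n) → ℝ := fun y => ‖f y - z‖ + α * ‖y‖ with hgdef
    have hgc : Continuous g :=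
      ((hf.continuous.sub continuous_const).norm).add (continuous_const.mul continuous_norm)
    obtain ⟨y₀, hy₀K, hmin⟩ :=
      hK.exists_isMinOn ⟨0, mem_closedBall_self hε.le⟩ hgc.continuousOn
    have hf0 : f 0 = x := hx
    have hg0 : g 0 = r := by
      simp [hgdef, hf0, hrdef, dist_eq_norm, norm_sub_rev]
    have hgy₀ : g y₀ ≤ r := hg0 ▸ hmin (mem_closedBall_self hε.le)
    have hy₀norm : ‖y₀‖ < ε := by
      have h3 : α * ‖y₀‖ ≤ r := by
        have := norm_nonneg (f y₀ - z)
        simp only [hgdef] at hgy₀; linarith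
      have h4 : r = (r/ε) * ε := by field_simp
      have h5 : α * ‖y₀‖ < α * ε := by
        calc α * ‖y₀‖ ≤ r := h3
          _ = (r/ε) * ε := h4
          _ < α * ε := by nlinarith
      exact lt_of_mul_lt_mul_left h5 hα0.le
    by_cases hu : f y₀ = z
    · exact ⟨y₀, hy₀K, hu⟩
    set u := f y₀ - z with hudef
    have hu0 : u ≠ 0 := sub_ne_zero.mpr hu
    have hupos : 0 < ‖u‖ := norm_pos_iff.mpr hu0
    set Df := fderiv ℝ f y₀ with hDfdef
    have hy₀ε₀ : y₀ ∈ closedBall (0:EuclideanSpace ℝ (Fin n)) ε₀ := closedBall_subset_closedBall hεε₀ hy₀K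
    have hlow : ∀ w : EuclideanSpace ℝ (Fin n), (c/4) * ‖w‖ ≤ ‖Df w‖ := hsv y₀ hy₀ε₀
    have hinj : Function.Injective Df := by
      intro a b hab
      have h1 : Df (a - b) = 0 := by rw [map_sub, hab, sub_self]
      have h2 := hlow (a - b)
      rw [h1, norm_zero] at h2
      have h3 : ‖a - b‖ ≤ 0 := by nlinarith [norm_nonneg (a-b)]
      have : a - b = 0 := norm_le_zero_iff.mp h3
      exact sub_eq_zero.mp this
    have hsurj : Function.Surjective Df := by
      have := (LinearMap.injective_iff_surjective (f := (Df : EuclideanSpace ℝ (Fin n) →ₗ[ℝ] EuclideanSpace ℝ (Fin n)))).mp hinj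
      exact this
    obtain ⟨v, hv⟩ := hsurj (-u)
    have hvnorm : ‖v‖ ≤ 4/c * ‖u‖ := by
      have h1 := hlow v
      rw [hv, norm_neg] at h1
      rw [div_mul_eq_mul_div, le_div_iff₀ hc]
      nlinarith
    have hder : HasFDerivAt f Df y₀ := (hf.differentiable one_ne_zero y₀).hasFDerivAt
    have hL : HasDerivAt (fun t : ℝ => y₀ + t • v) v 0 := by
      simpa using ((hasDerivAt_id (0:ℝ)).smul_const v).const_add y₀
    have hder' : HasFDerivAt f Df (y₀ + (0:ℝ) • v) := by simpa using hder
    have hcomp : HasDerivAt (fun t : ℝ => f (y₀ + t • v)) (Df v) 0 :=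
      HasFDerivAt.comp_hasDerivAt (l := f) (l' := Df) 0 hder' hL
    have hlo := hasDerivAt_iff_isLittleO.mp hcomp
    set δ := (1 - α*(4/c)) * ‖u‖ / 2 with hδdef
    have h4α : α * (4/c) < 1 := by
      rw [mul_div_assoc', div_lt_one hc]; nlinarith
    have hδ : 0 < δ := by
      apply div_pos (mul_pos (by linarith) hupos) two_pos
    have hev1 := hlo.def hδ
    have hev2 : ∀ᶠ t : ℝ in nhds 0, ‖y₀‖ + ‖t • v‖ ≤ ε := by
      have hcont : Continuous fun t : ℝ => ‖y₀‖ + ‖t • v‖ := by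
        continuity
      have h0 : ‖y₀‖ + ‖(0:ℝ) • v‖ < ε := by simpa using hy₀norm
      have := (hcont.tendsto 0).eventually_lt_const h0
      filter_upwards [this] with t ht using ht.le
    have hmem : Ioc (0:ℝ) 1 ∈ nhdsWithin (0:ℝ) (Ioi 0) :=
      Ioc_mem_nhdsGT_of_mem (by norm_num)
    obtain ⟨t, ⟨⟨herr, hball⟩, ht0, ht1⟩⟩ :=
      (((hev1.and hev2).filter_mono nhdsWithin_le_nhds).and
        (eventually_of_mem hmem fun t ht => ht)).exists
    simp only [zero_smul, add_zero, sub_zero] at herr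
    have habs : ‖(t:ℝ)‖ = t := abs_of_pos ht0
    rw [habs] at herr
    -- y₀ + t • v is in the ball
    have hmemK : y₀ + t • v ∈ closedBall (0:EuclideanSpace ℝ (Fin n)) ε := by
      rw [mem_closedBall_zero_iff]
      calc ‖y₀ + t • v‖ ≤ ‖y₀‖ + ‖t • v‖ := norm_add_le _ _
        _ ≤ ε := hball
    -- estimate g (y₀ + t • v)
    have hkey : f (y₀ + t • v) - z = (f (y₀ + t • v) - f y₀ - t • Df v) + (1 - t) • u := by
      rw [hv, hudef]
      module
    have hest1 : ‖f (y₀ + t • v) - z‖ ≤ δ * t + (1 - t) * ‖u‖ := by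
      rw [hkey]
      calc ‖(f (y₀ + t • v) - f y₀ - t • Df v) + (1 - t) • u‖
          ≤ ‖f (y₀ + t • v) - f y₀ - t • Df v‖ + ‖(1-t) • u‖ := norm_add_le _ _
        _ ≤ δ * t + (1 - t) * ‖u‖ := by
            have : ‖(1-t) • u‖ = (1-t) * ‖u‖ := by
              rw [norm_smul, Real.norm_eq_abs, abs_of_nonneg (by linarith)]
            rw [this]; linarith
    have hest2 : ‖y₀ + t • v‖ ≤ ‖y₀‖ + t * ‖v‖ := by
      calc ‖y₀ + t • v‖ ≤ ‖y₀‖ + ‖t • v‖ := norm_add_le _ _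
        _ = ‖y₀‖ + t * ‖v‖ := by rw [norm_smul, Real.norm_eq_abs, abs_of_pos ht0]
    have hmin2 : g y₀ ≤ g (y₀ + t • v) := hmin hmemK
    have hgy₀eq : g y₀ = ‖u‖ + α * ‖y₀‖ := by simp [hgdef, hudef]
    have hgt : g (y₀ + t • v) ≤ δ * t + (1-t) * ‖u‖ + α * (‖y₀‖ + t * ‖v‖) := by
      simp only [hgdef]
      have := mul_le_mul_of_nonneg_left hest2 hα0.le
      linarith
    -- derive contradiction
    exfalso
    have hchain : ‖u‖ + α * ‖y₀‖ ≤ δ * t + (1-t) * ‖u‖ + α * (‖y₀‖ + t * ‖v‖) := by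
      rw [← hgy₀eq]; exact le_trans hmin2 hgt
    have hvu : α * (t * ‖v‖) ≤ α * (t * (4/c * ‖u‖)) := by
      apply mul_le_mul_of_nonneg_left _ hα0.le
      exact mul_le_mul_of_nonneg_left hvnorm ht0.le
    have hfinal : t * ‖u‖ ≤ δ * t + α * t * (4/c) * ‖u‖ := by nlinarith
    -- divide by t
    have h6 : ‖u‖ ≤ δ + α * (4/c) * ‖u‖ := by
      have := (mul_le_mul_iff_of_pos_left ht0).mp (by nlinarith : t * ‖u‖ ≤ t * (δ + α * (4/c) * ‖u‖))
      linarith [this]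
    rw [hδdef] at h6
    nlinarith
  -- conclude for the closed ball by closedness of the image
  have hr : 0 < c * ε / 4 := by positivity
  have hsub : ball x (c*ε/4) ⊆ f '' closedBall (0:EuclideanSpace ℝ (Fin n)) ε := fun z hz => main z (mem_ball.mp hz)
  intro z hz
  have h1 : z ∈ closure (ball x (c*ε/4)) := by
    rw [closure_ball x (ne_of_gt hr)]; exact hz
  have h2 := closure_mono hsub h1
  rwa [himc.isClosed.closure_eq] at h2
end
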